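/- arXiv:0708.4247 — 5 statements merged into one kernel-verified Lean document; each statement's English description precedes it below -/
import Mathlib

section
/- Let (B, p⊥, τ) be a static anisotropic (CGL) plasma equilibrium on ℝ³ with τ(x) < 1 for every x. Define B̃ := √(1 − τ) B and the mean pressure p := p⊥ + τ |B|²/2. Then curl B̃ × B̃ = grad p and div B̃ = 0 everywhere on ℝ³; that is, (B̃, p) is a static isotropic (MHD) plasma equilibrium. -/
open Matrix

noncomputable section

abbrev R3 : Type := Fin 3 → ℝ

/-- Partial derivative in the `i`-th coordinate direction. -/
def pd (i : Fin 3) (f : R3 → ℝ) (x : R3) : ℝ := fderiv ℝ f x (Pi.single i 1)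

/-- Gradient of a scalar field on ℝ³. -/
def grad3 (f : R3 → ℝ) (x : R3) : R3 := fun i => pd i f x

/-- Divergence of a vector field on ℝ³. -/
def div3 (B : R3 → R3) (x : R3) : ℝ := ∑ i, pd i (fun y => B y i) x

/-- Curl of a vector field on ℝ³. -/
def curl3 (B : R3 → R3) (x : R3) : R3 :=
  ![pd 1 (fun y => B y 2) x - pd 2 (fun y => B y 1) x,
    pd 2 (fun y => B y 0) x - pd 0 (fun y => B y 2) x,
    pd 0 (fun y => B y 1) x - pd 1 (fun y => B y 0) x]

/-! With `s = √(1 - τ)` one has `s • grad s = -(1/2) • grad τ`, so `B ⬝ grad τ = 0` forces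
`B ⬝ grad s = 0`. Hence `div (s B) = grad s ⬝ B + s div B = 0`, and by the triple product expansion
`curl (s B) × s B = s² (curl B × B) + s ((grad s × B) × B) = (1 - τ) (curl B × B) + (|B|²/2) grad τ`,
which the CGL momentum balance identifies with `grad (p⊥ + τ |B|²/2)`. -/

section VectorCalculus

variable {f g : R3 → ℝ} {B : R3 → R3} {x : R3}

lemma pd_add (hf : DifferentiableAt ℝ f x) (hg : DifferentiableAt ℝ g x) (i : Fin 3) :
    pd i (fun y => f y + g y) x = pd i f x + pd i g x := by
  simp only [pd, fderiv_fun_add hf hg, _root_.add_apply]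

lemma pd_mul (hf : DifferentiableAt ℝ f x) (hg : DifferentiableAt ℝ g x) (i : Fin 3) :
    pd i (fun y => f y * g y) x = f x * pd i g x + g x * pd i f x := by
  simp only [pd, fderiv_fun_mul hf hg, _root_.add_apply, _root_.smul_apply, smul_eq_mul]

lemma grad3_add (hf : DifferentiableAt ℝ f x) (hg : DifferentiableAt ℝ g x) :
    grad3 (fun y => f y + g y) x = grad3 f x + grad3 g x :=
  funext (pd_add hf hg)

lemma grad3_mul (hf : DifferentiableAt ℝ f x) (hg : DifferentiableAt ℝ g x) :
    grad3 (fun y => f y * g y) x = f x • grad3 g x + g x • grad3 f x :=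
  funext (pd_mul hf hg)

lemma grad3_const_sub (c : ℝ) : grad3 (fun y => c - f y) x = -grad3 f x := by
  ext i
  simp only [grad3, pd, fderiv_const_sub, _root_.neg_apply, Pi.neg_apply]

lemma sqrt_smul_grad3_sqrt (hf : DifferentiableAt ℝ f x) (hx : 0 < f x) :
    √(f x) • grad3 (fun y => √(f y)) x = (1 / 2 : ℝ) • grad3 f x := by
  have hd : fderiv ℝ (fun y => √(f y)) x = (1 / (2 * √(f x))) • fderiv ℝ f x :=
    ((Real.hasDerivAt_sqrt hx.ne').comp_hasFDerivAt x hf.hasFDerivAt).fderiv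
  ext i
  simp only [grad3, pd, hd, Pi.smul_apply, _root_.smul_apply, smul_eq_mul]
  field_simp [(Real.sqrt_pos.2 hx).ne']

lemma pd_mul_component (hf : DifferentiableAt ℝ f x) (hB : DifferentiableAt ℝ B x) (i j : Fin 3) :
    pd i (fun y => f y * B y j) x = f x * pd i (fun y => B y j) x + B x j * pd i f x :=
  pd_mul hf (differentiableAt_pi.1 hB j) i

lemma div3_smul (hf : DifferentiableAt ℝ f x) (hB : DifferentiableAt ℝ B x) :
    div3 (fun y => f y • B y) x = grad3 f x ⬝ᵥ B x + f x * div3 B x := by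
  simp only [div3, Pi.smul_apply, smul_eq_mul, pd_mul_component hf hB, Fin.sum_univ_three,
    dotProduct, grad3]
  ring

lemma curl3_smul (hf : DifferentiableAt ℝ f x) (hB : DifferentiableAt ℝ B x) :
    curl3 (fun y => f y • B y) x = f x • curl3 B x + grad3 f x ⨯₃ B x := by
  ext i
  fin_cases i <;>
  · simp only [curl3, cross_apply, grad3, Pi.add_apply, Pi.smul_apply, smul_eq_mul, smul_cons,
      smul_empty, Fin.zero_eta, Fin.mk_one, Fin.reduceFinMk, cons_val_zero, cons_val_one, cons_val,
      pd_mul_component hf hB]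
    ring

end VectorCalculus

lemma add_cross_cross_smul {R : Type*} [CommRing R] (s : R) (u v w : Fin 3 → R)
    (hvw : v ⬝ᵥ w = 0) :
    (s • u + v ⨯₃ w) ⨯₃ (s • w) = (s * s) • (u ⨯₃ w) - (w ⬝ᵥ w) • (s • v) := by
  rw [map_smul, LinearMap.map_add₂, LinearMap.map_smul₂, cross_cross_eq_smul_sub_smul, hvw]
  module

/-- A static anisotropic (CGL) equilibrium `(B, p⊥, τ)` with `τ < 1` gives rise to a
static isotropic (MHD) equilibrium `(B̃, p)` where `B̃ = √(1−τ) B` and `p = p⊥ + τ|B|²/2`. -/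
theorem cgl_to_mhd
    (B : R3 → R3) (pperp τ : R3 → ℝ)
    (hB : ContDiff ℝ (⊤ : ℕ∞) B) (hpperp : ContDiff ℝ (⊤ : ℕ∞) pperp)
    (hτ : ContDiff ℝ (⊤ : ℕ∞) τ)
    (hτlt : ∀ x, τ x < 1)
    (hmom : ∀ x, (1 - τ x) • crossProduct (curl3 B x) (B x) =
      grad3 pperp x + τ x • grad3 (fun y => (B y ⬝ᵥ B y) / 2) x + (B x ⬝ᵥ grad3 τ x) • B x)
    (hdiv : ∀ x, div3 B x = 0)
    (hstate : ∀ x, B x ⬝ᵥ grad3 τ x = 0)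
    (Bt : R3 → R3) (hBt : Bt = fun x => Real.sqrt (1 - τ x) • B x)
    (p : R3 → ℝ) (hp : p = fun x => pperp x + τ x * (B x ⬝ᵥ B x) / 2) :
    (∀ x, crossProduct (curl3 Bt x) (Bt x) = grad3 p x) ∧ (∀ x, div3 Bt x = 0) := by
  subst hBt hp
  have hBd := hB.differentiable (by simp)
  have hτd := hτ.differentiable (by simp)
  have hpos x : 0 < 1 - τ x := sub_pos.2 (hτlt x)
  have hsd x : DifferentiableAt ℝ (fun y => √(1 - τ y)) x :=
    ((hτd x).const_sub 1).sqrt (hpos x).ne'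
  have hs_grad x : √(1 - τ x) • grad3 (fun y => √(1 - τ y)) x = -(1 / 2 : ℝ) • grad3 τ x := by
    rw [sqrt_smul_grad3_sqrt ((hτd x).const_sub 1) (hpos x), grad3_const_sub, smul_neg, neg_smul]
  have hB_grad_s x : grad3 (fun y => √(1 - τ y)) x ⬝ᵥ B x = 0 := by
    have h := congrArg (B x ⬝ᵥ ·) (hs_grad x)
    simp only [dotProduct_smul, hstate, mul_zero, smul_eq_mul] at h
    rw [dotProduct_comm]
    exact (mul_eq_zero.1 h).resolve_left (Real.sqrt_pos.2 (hpos x)).ne'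
  have hQd : Differentiable ℝ (fun y => (B y ⬝ᵥ B y) / 2) := by
    simp only [dotProduct]
    fun_prop
  have hp_grad x : grad3 (fun y => pperp y + τ y * (B y ⬝ᵥ B y) / 2) x = grad3 pperp x
      + (τ x • grad3 (fun y => (B y ⬝ᵥ B y) / 2) x + ((B x ⬝ᵥ B x) / 2) • grad3 τ x) := by
    simp_rw [mul_div_assoc]
    rw [grad3_add (g := fun y => τ y * ((B y ⬝ᵥ B y) / 2)) (hpperp.differentiable (by simp) x)
      ((hτd x).mul (hQd x)), grad3_mul (hτd x) (hQd x)]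
  refine ⟨fun x => ?_, fun x => ?_⟩
  · rw [curl3_smul (hsd x) (hBd x), add_cross_cross_smul _ _ _ _ (hB_grad_s x), hs_grad,
      Real.mul_self_sqrt (hpos x).le, hmom, hstate, zero_smul, add_zero, hp_grad]
    module
  · rw [div3_smul (hsd x) (hBd x), hB_grad_s, hdiv, mul_zero, add_zero]
end
end

section
/- Let B : ℝ³ → ℝ³, τ : ℝ³ → ℝ, p : ℝ³ → ℝ be smooth fields with τ(x) < 1 for every x, div B = 0, and B · grad τ = 0. Suppose the field B̃ := √(1 − τ) B satisfies curl B̃ × B̃ = grad p everywhere. Then, setting p⊥ := p − τ |B|²/2, the triple (B, p⊥, τ) is a static anisotropic (CGL) plasma equilibrium, i.e. (1 − τ)(curl B) × B = grad p⊥ + τ grad(|B|²/2) + (B · grad τ) B, div B = 0, and B · grad τ = 0 on ℝ³. -/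
/-!
With `f = √(1 - τ)`, the product rule `curl (f B) = f curl B + grad f × B` together with
`f grad f = -grad τ / 2` and `(a × B) × B = (a · B) B - |B|² a` turns the MHD force of `B̃ = f B` into
`curl B̃ × B̃ = (1 - τ) curl B × B + (|B|²/2) grad τ - ((B · grad τ)/2) B`.
Since `grad (τ |B|²/2) = τ grad (|B|²/2) + (|B|²/2) grad τ`, subtracting it from `grad p` and using
`B · grad τ = 0` leaves exactly the CGL momentum balance.
-/

open Matrix

noncomputable section

@[fun_prop]
lemma DifferentiableAt.dotProduct {E ι : Type*} [NormedAddCommGroup E] [NormedSpace ℝ E]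
    [Fintype ι] {u v : E → ι → ℝ} {x : E} (hu : DifferentiableAt ℝ u x)
    (hv : DifferentiableAt ℝ v x) : DifferentiableAt ℝ (fun y => u y ⬝ᵥ v y) x := by
  have hui : ∀ i, DifferentiableAt ℝ (fun y => u y i) x := differentiableAt_pi.1 hu
  have hvi : ∀ i, DifferentiableAt ℝ (fun y => v y i) x := differentiableAt_pi.1 hv
  simp only [_root_.dotProduct]
  fun_prop

section VectorCalculus

variable {f g : R3 → ℝ} {B : R3 → R3} {x : R3}

lemma grad3_sub (hf : DifferentiableAt ℝ f x) (hg : DifferentiableAt ℝ g x) :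
    grad3 (fun y => f y - g y) x = grad3 f x - grad3 g x := by
  ext i
  simp [grad3, pd, fderiv_fun_sub hf hg]

lemma grad3_sqrt_one_sub (hf : DifferentiableAt ℝ f x) (hfx : f x < 1) :
    grad3 (fun y => √(1 - f y)) x = -(2 * √(1 - f x))⁻¹ • grad3 f x := by
  have h : HasFDerivAt (fun y => √(1 - f y)) ((1 / (2 * √(1 - f x))) • (0 - fderiv ℝ f x)) x :=
    (Real.hasDerivAt_sqrt (by linarith)).comp_hasFDerivAt x
      ((hasFDerivAt_const (1 : ℝ) x).sub hf.hasFDerivAt)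
  ext i
  simp [grad3, pd, h.fderiv]

lemma curl3_sqrt_one_sub_smul_cross (hf : DifferentiableAt ℝ f x) (hB : DifferentiableAt ℝ B x)
    (hfx : f x < 1) :
    curl3 (fun y => √(1 - f y) • B y) x ⨯₃ (√(1 - f x) • B x)
      = (1 - f x) • (curl3 B x ⨯₃ B x) + (B x ⬝ᵥ B x / 2) • grad3 f x
        - (B x ⬝ᵥ grad3 f x / 2) • B x := by
  have hsqrt : DifferentiableAt ℝ (fun y => √(1 - f y)) x := by
    apply DifferentiableAt.sqrt (by fun_prop); linarith
  have hsqrt_pos : 0 < √(1 - f x) := Real.sqrt_pos.2 (by linarith)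
  rw [curl3_smul hsqrt hB, grad3_sqrt_one_sub hf hfx, dotProduct_comm (B x) (grad3 f x)]
  simp only [map_add, map_smul, LinearMap.add_apply, LinearMap.smul_apply,
    cross_cross_eq_smul_sub_smul]
  match_scalars <;> field_simp
  exact Real.sq_sqrt (by linarith)

end VectorCalculus

/-- If `B̃ = √(1−τ) B` together with `p` solves the static isotropic (MHD)
equilibrium momentum equation, with `div B = 0`, `B·grad τ = 0`, `τ < 1`, then
`(B, p⊥, τ)` with `p⊥ = p − τ|B|²/2` is a static anisotropic (CGL) equilibrium. -/
theorem mhd_to_cgl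
    (B : R3 → R3) (τ p : R3 → ℝ)
    (hB : ContDiff ℝ (⊤ : ℕ∞) B) (hτ : ContDiff ℝ (⊤ : ℕ∞) τ) (hp : ContDiff ℝ (⊤ : ℕ∞) p)
    (hτlt : ∀ x, τ x < 1)
    (hdiv : ∀ x, div3 B x = 0)
    (hstate : ∀ x, B x ⬝ᵥ grad3 τ x = 0)
    (Bt : R3 → R3) (hBt : Bt = fun x => Real.sqrt (1 - τ x) • B x)
    (hmomt : ∀ x, crossProduct (curl3 Bt x) (Bt x) = grad3 p x)
    (pperp : R3 → ℝ) (hpperp : pperp = fun x => p x - τ x * (B x ⬝ᵥ B x) / 2) :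
    (∀ x, (1 - τ x) • crossProduct (curl3 B x) (B x) =
      grad3 pperp x + τ x • grad3 (fun y => (B y ⬝ᵥ B y) / 2) x + (B x ⬝ᵥ grad3 τ x) • B x) ∧
    (∀ x, div3 B x = 0) ∧ (∀ x, B x ⬝ᵥ grad3 τ x = 0) := by
  refine ⟨fun x => ?_, hdiv, hstate⟩
  have hBx : DifferentiableAt ℝ B x := hB.differentiable (by simp) x
  have hKx : DifferentiableAt ℝ (fun y => B y ⬝ᵥ B y / 2) x := by fun_prop
  have hτx : DifferentiableAt ℝ τ x := hτ.differentiable (by simp) x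
  have hpx : DifferentiableAt ℝ p x := hp.differentiable (by simp) x
  have hpperp_eq : pperp = fun y => p y - τ y * (B y ⬝ᵥ B y / 2) := by
    rw [hpperp]; funext y; ring
  have hgrad_pperp : grad3 pperp x = grad3 p x
      - (τ x • grad3 (fun y => B y ⬝ᵥ B y / 2) x + (B x ⬝ᵥ B x / 2) • grad3 τ x) := by
    rw [hpperp_eq, grad3_sub (g := fun y => τ y * (B y ⬝ᵥ B y / 2)) hpx (hτx.mul hKx),
      grad3_mul hτx hKx]
  have hmom := hmomt x
  rw [hBt, curl3_sqrt_one_sub_smul_cross hτx hBx (hτlt x), hstate x] at hmom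
  rw [hgrad_pperp, ← hmom, hstate x]
  module
end
end

section
/- Let B : ℝ³ → ℝ³, p⊥ : ℝ³ → ℝ, τ : ℝ³ → ℝ be any fields with τ(x) ≤ 1 everywhere, and let M : ℝ³ → ℝ satisfy M(x) > 0 for all x. Define B′ := M B, τ′ := 1 − (1 − τ)/M², and p⊥′ := p⊥ + (|B|² − |B′|²)/2. Then pointwise: (i) 1 − τ′ = (1 − τ)/M², so τ′(x) ≤ 1 everywhere; (ii) √(1 − τ′) B′ = √(1 − τ) B; and (iii) p⊥′ + τ′ |B′|²/2 = p⊥ + τ |B|²/2, i.e. the field √(1 − τ) B and the mean pressure p = p⊥ + τ|B|²/2 are invariant under the infinite-dimensional symmetry transformations of the static CGL system. -/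
/-!
Under `B ↦ M B`, `1 - τ ↦ (1 - τ) / M²` the quantity `(1 - τ) |B|²` is unchanged, and `M > 0` lets
the square root absorb `M²` exactly, which gives the invariance of `√(1 - τ) B`. Writing
`p⊥ + τ |B|²/2 = (p⊥ + |B|²/2) - (1 - τ) |B|²/2`, the total pressure `p⊥ + |B|²/2` is preserved
by the definition of `p⊥′`, and so the mean pressure is preserved as well.
-/

open Matrix

noncomputable section

lemma dotProduct_smul_smul {n R : Type*} [Fintype n] [CommSemiring R] (m : R) (v w : n → R) :
    (m • v) ⬝ᵥ (m • w) = m ^ 2 * (v ⬝ᵥ w) := by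
  rw [smul_dotProduct, dotProduct_smul, smul_smul, smul_eq_mul, sq]

lemma sqrt_div_sq_mul_self (a : ℝ) {m : ℝ} (hm : 0 < m) : √(a / m ^ 2) * m = √a := by
  rw [Real.sqrt_div' a (sq_nonneg m), Real.sqrt_sq hm.le, div_mul_cancel₀ _ hm.ne']

lemma sqrt_div_sq_smul_smul {V : Type*} [AddCommGroup V] [Module ℝ V] (a : ℝ) {m : ℝ}
    (hm : 0 < m) (v : V) : √(a / m ^ 2) • m • v = √a • v := by
  rw [smul_smul, sqrt_div_sq_mul_self a hm]

lemma mean_pressure_rescale (p t s : ℝ) {m : ℝ} (hm : m ≠ 0) :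
    p + (s - m ^ 2 * s) / 2 + (1 - (1 - t) / m ^ 2) * (m ^ 2 * s) / 2 = p + t * s / 2 := by
  field_simp
  ring

/-- Pointwise algebraic invariants of the infinite CGL symmetry
transformations: `1 − τ′ = (1 − τ)/M²` (so `τ′ ≤ 1`), `√(1−τ′) B′ = √(1−τ) B`,
and the mean pressure `p⊥ + τ|B|²/2` is invariant. -/
theorem cgl_symmetry_invariants
    (B : R3 → R3) (pperp τ M : R3 → ℝ)
    (hτ : ∀ x, τ x ≤ 1) (hM : ∀ x, 0 < M x)
    (B' : R3 → R3) (hB' : B' = fun x => M x • B x)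
    (τ' : R3 → ℝ) (hτ' : τ' = fun x => 1 - (1 - τ x) / (M x) ^ 2)
    (pperp' : R3 → ℝ)
    (hpperp' : pperp' = fun x => pperp x + (B x ⬝ᵥ B x - B' x ⬝ᵥ B' x) / 2) :
    (∀ x, 1 - τ' x = (1 - τ x) / (M x) ^ 2) ∧ (∀ x, τ' x ≤ 1) ∧
    (∀ x, Real.sqrt (1 - τ' x) • B' x = Real.sqrt (1 - τ x) • B x) ∧
    (∀ x, pperp' x + τ' x * (B' x ⬝ᵥ B' x) / 2 = pperp x + τ x * (B x ⬝ᵥ B x) / 2) := by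
  subst hB' hτ' hpperp'
  have one_sub_tau' : ∀ x, 1 - (1 - (1 - τ x) / M x ^ 2) = (1 - τ x) / M x ^ 2 :=
    fun x => sub_sub_cancel _ _
  refine ⟨one_sub_tau', fun x => ?_, fun x => ?_, fun x => ?_⟩
  · exact sub_le_self _ (div_nonneg (sub_nonneg.2 (hτ x)) (sq_nonneg _))
  · simp only [one_sub_tau']
    exact sqrt_div_sq_smul_smul _ (hM x) (B x)
  · simp only [dotProduct_smul_smul]
    exact mean_pressure_rescale _ _ _ (hM x).ne'
end
end

section
/- Let B : ℝ³ → ℝ³, p⊥ : ℝ³ → ℝ, τ : ℝ³ → ℝ be fields, let M : ℝ³ → ℝ satisfy M(x) ≠ 0 for all x, and define the transformed fields B′ := M B, τ′ := 1 − (1 − τ)/M², p⊥′ := p⊥ + (|B|² − |B′|²)/2. Set p∥ := p⊥ + τ|B|² and p∥′ := p⊥′ + τ′|B′|². Then at every point: 1 − τ′ = (1 − τ)/M², and consequently the fire-hose instability condition p∥ − p⊥ > |B|² (equivalently τ > 1) holds at a point if and only if p∥′ − p⊥′ > |B′|² (equivalently τ′ > 1) holds there; i.e. the infinite symmetry transformations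 do not change fire-hose stability or instability of the plasma configuration. -/
open Matrix

noncomputable section

lemma smul_dotProduct_smul_self {ι R : Type*} [Fintype ι] [CommRing R] (c : R) (v : ι → R) :
    (c • v) ⬝ᵥ (c • v) = c ^ 2 * (v ⬝ᵥ v) := by
  simp only [smul_dotProduct, dotProduct_smul, smul_eq_mul]
  ring

/-- With `b = |B|²`, `p∥ − p⊥ − |B|² = (τ − 1) b`; under `B ↦ M B`, `τ ↦ 1 − (1 − τ)/M²` the factor
`τ − 1` is divided by `M²` while `b` is multiplied by it, so this fire-hose margin is invariant. -/
lemma firehose_margin_invariant {M τ b : ℝ} (hM : M ≠ 0) :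
    (1 - (1 - τ) / M ^ 2) * (M ^ 2 * b) - M ^ 2 * b = τ * b - b := by
  field_simp
  ring

/-- The infinite CGL symmetry transformations preserve the fire-hose
instability condition `p∥ − p⊥ > |B|²`: it holds at a point for the original
configuration iff it holds there for the transformed one. -/
theorem cgl_firehose_invariance
    (B : R3 → R3) (pperp τ M : R3 → ℝ) (hM : ∀ x, M x ≠ 0)
    (B' : R3 → R3) (hB' : B' = fun x => M x • B x)
    (τ' : R3 → ℝ) (hτ' : τ' = fun x => 1 - (1 - τ x) / (M x) ^ 2)
    (pperp' : R3 → ℝ)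
    (hpperp' : pperp' = fun x => pperp x + (B x ⬝ᵥ B x - B' x ⬝ᵥ B' x) / 2)
    (ppar : R3 → ℝ) (hppar : ppar = fun x => pperp x + τ x * (B x ⬝ᵥ B x))
    (ppar' : R3 → ℝ) (hppar' : ppar' = fun x => pperp' x + τ' x * (B' x ⬝ᵥ B' x)) :
    (∀ x, 1 - τ' x = (1 - τ x) / (M x) ^ 2) ∧
    (∀ x, (ppar x - pperp x > B x ⬝ᵥ B x ↔ ppar' x - pperp' x > B' x ⬝ᵥ B' x)) := by
  subst hB' hτ' hpperp' hppar hppar'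
  refine ⟨fun x => by ring, fun x => ?_⟩
  have margin := firehose_margin_invariant (hM x) (τ := τ x) (b := B x ⬝ᵥ B x)
  simp only [smul_dotProduct_smul_self]
  constructor <;> intro h <;> linarith
end
end

section
/- For a nowhere-vanishing function M : ℝ³ → ℝ, define the transformation T_M acting on triples of fields (B, p⊥, τ) (B : ℝ³ → ℝ³, p⊥, τ : ℝ³ → ℝ) by T_M(B, p⊥, τ) := (M B, p⊥ + (1 − M²)|B|²/2, 1 − (1 − τ)/M²). Then for any nowhere-vanishing M₁, M₂ : ℝ³ → ℝ and any triple (B, p⊥, τ): T_{M₂}(T_{M₁}(B, p⊥, τ)) = T_{M₁ M₂}(B, p⊥, τ); T_1 is the identity transformation; and T_{1/M}(T_M(B, p⊥, τ)) = (B, p⊥, τ). In particular these transformations form an abelian group under composition. -/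
open Matrix

noncomputable section

def Tmap (M : R3 → ℝ) (t : (R3 → R3) × (R3 → ℝ) × (R3 → ℝ)) :
    (R3 → R3) × (R3 → ℝ) × (R3 → ℝ) :=
  (fun x => M x • t.1 x,
   fun x => t.2.1 x + (1 - (M x) ^ 2) * (t.1 x ⬝ᵥ t.1 x) / 2,
   fun x => 1 - (1 - t.2.2 x) / (M x) ^ 2)

lemma Tmap_Tmap (M₁ M₂ : R3 → ℝ) (t : (R3 → R3) × (R3 → ℝ) × (R3 → ℝ)) :
    Tmap M₂ (Tmap M₁ t) = Tmap (fun x => M₁ x * M₂ x) t := by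
  refine Prod.ext ?_ (Prod.ext ?_ ?_) <;> funext x <;>
    simp only [Tmap, smul_smul, smul_dotProduct, dotProduct_smul, smul_eq_mul]
  · rw [mul_comm]
  · ring
  · rw [sub_sub_cancel, div_div, mul_pow]

lemma Tmap_one (t : (R3 → R3) × (R3 → ℝ) × (R3 → ℝ)) : Tmap (fun _ => 1) t = t := by
  refine Prod.ext ?_ (Prod.ext ?_ ?_) <;> funext x <;> simp [Tmap]

lemma Tmap_inv_Tmap (M : R3 → ℝ) (hM : ∀ x, M x ≠ 0) (t : (R3 → R3) × (R3 → ℝ) × (R3 → ℝ)) :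
    Tmap (fun x => (M x)⁻¹) (Tmap M t) = t := by
  simp only [Tmap_Tmap, mul_inv_cancel₀ (hM _), Tmap_one]

lemma Tmap_comm (M₁ M₂ : R3 → ℝ) (t : (R3 → R3) × (R3 → ℝ) × (R3 → ℝ)) :
    Tmap M₂ (Tmap M₁ t) = Tmap M₁ (Tmap M₂ t) := by
  simp only [Tmap_Tmap, mul_comm]

theorem Tmap_group_general
    (M₁ M₂ M : R3 → ℝ) (hM : ∀ x, M x ≠ 0)
    (t : (R3 → R3) × (R3 → ℝ) × (R3 → ℝ)) :
    Tmap M₂ (Tmap M₁ t) = Tmap (fun x => M₁ x * M₂ x) t ∧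
    Tmap (fun _ => 1) t = t ∧
    Tmap (fun x => (M x)⁻¹) (Tmap M t) = t ∧
    Tmap M₂ (Tmap M₁ t) = Tmap M₁ (Tmap M₂ t) :=
  ⟨Tmap_Tmap M₁ M₂ t, Tmap_one t, Tmap_inv_Tmap M hM t, Tmap_comm M₁ M₂ t⟩

/-- The transformations `T_M` compose as `T_{M₂} ∘ T_{M₁} = T_{M₁M₂}`,
`T_1` is the identity, and `T_{1/M}` inverts `T_M`; hence they form an abelian group. -/
theorem Tmap_group
    (M₁ M₂ M : R3 → ℝ) (hM₁ : ∀ x, M₁ x ≠ 0) (hM₂ : ∀ x, M₂ x ≠ 0) (hM : ∀ x, M x ≠ 0)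
    (t : (R3 → R3) × (R3 → ℝ) × (R3 → ℝ)) :
    Tmap M₂ (Tmap M₁ t) = Tmap (fun x => M₁ x * M₂ x) t ∧
    Tmap (fun _ => 1) t = t ∧
    Tmap (fun x => (M x)⁻¹) (Tmap M t) = t ∧
    Tmap M₂ (Tmap M₁ t) = Tmap M₁ (Tmap M₂ t) :=
  Tmap_group_general M₁ M₂ M hM t
end
end
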